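/- Let G be a DAG with leaf set X and the k-lca-property. Then the clustering system 𝒞_G is pre-k-ary: for every nonempty U ⊆ X with |U| ≤ k, the intersection ⋂{C ∈ 𝒞_G : U ⊆ C} belongs to 𝒞_G. -/

import Mathlib

namespace Dag

variable {V : Type*}

/-- Reachability order of a digraph: `v ⪯ w` iff there is a directed path from `w` to `v`. -/
def reach (adj : V → V → Prop) (v w : V) : Prop :=
  Relation.ReflTransGen (fun a b => adj b a) v w

/-- The digraph is acyclic: its reachability relation is antisymmetric. -/
def acyclic (adj : V → V → Prop) : Prop :=
  ∀ v w, reach adj v w → reach adj w v → v = w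

/-- A leaf is a `⪯`-minimal vertex. -/
def leaf (adj : V → V → Prop) (x : V) : Prop :=
  ∀ v, reach adj v x → v = x

/-- The set of leaves of the digraph. -/
def leaves (adj : V → V → Prop) : Set V := {x | leaf adj x}

/-- The cluster of `v`: all leaves that are descendants of `v`. -/
def cluster (adj : V → V → Prop) (v : V) : Set V :=
  {x | leaf adj x ∧ reach adj x v}

/-- The clustering system of the digraph. -/
def clusters (adj : V → V → Prop) : Set (Set V) := {C | ∃ v, C = cluster adj v}

/-- `w` is a least common ancestor of `A`: a `⪯`-minimal common ancestor of `A`. -/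
def isLCA (adj : V → V → Prop) (A : Set V) (w : V) : Prop :=
  (∀ a ∈ A, reach adj a w) ∧ ∀ u, (∀ a ∈ A, reach adj a u) → reach adj u w → u = w

/-- `A` has a unique least common ancestor. -/
def hasUniqueLCA (adj : V → V → Prop) (A : Set V) : Prop := ∃! w, isLCA adj A w

end Dag

/-! In a finite DAG every common ancestor `v` of `U` lies above a `⪯`-minimal common ancestor,
i.e. above an lca of `U`. If that lca `w` is unique, `w ⪯ v` for every common ancestor `v`, so
`𝒞(w) ⊆ 𝒞(v)` for every cluster `𝒞(v) ⊇ U`; as `𝒞(w) ⊇ U` itself, `𝒞(w)` is the intersection. -/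

namespace Dag

variable {V : Type*} {adj : V → V → Prop}

theorem cluster_mono {v w : V} (h : reach adj w v) : cluster adj w ⊆ cluster adj v :=
  fun _ hx => ⟨hx.1, hx.2.trans h⟩

theorem subset_cluster_iff {A : Set V} (hA : A ⊆ leaves adj) {v : V} :
    A ⊆ cluster adj v ↔ ∀ a ∈ A, reach adj a v :=
  ⟨fun h _ ha => (h ha).2, fun h a ha => ⟨hA ha, h a ha⟩⟩

theorem exists_isLCA_reach [Finite V] (hacy : acyclic adj) {A : Set V} {v : V}
    (hv : ∀ a ∈ A, reach adj a v) : ∃ w, isLCA adj A w ∧ reach adj w v := by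
  let _ : Preorder V :=
    { le := reach adj
      le_refl := fun _ => .refl
      le_trans := fun _ _ _ => .trans }
  obtain ⟨w, hwv, hmin⟩ :=
    (Set.toFinite {u | ∀ a ∈ A, reach adj a u}).exists_le_minimal (a := v) hv
  exact ⟨w, ⟨hmin.prop, fun u hu huw => hacy _ _ huw (hmin.le_of_le hu huw)⟩, hwv⟩

theorem sInter_clusters_supset_eq_cluster [Finite V] (hacy : acyclic adj) {A : Set V}
    (hA : A ⊆ leaves adj) {w : V} (hw : isLCA adj A w) (huniq : ∀ u, isLCA adj A u → u = w) :
    ⋂₀ {C | C ∈ clusters adj ∧ A ⊆ C} = cluster adj w := by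
  have hmem : cluster adj w ∈ {C | C ∈ clusters adj ∧ A ⊆ C} :=
    ⟨⟨w, rfl⟩, (subset_cluster_iff hA).2 hw.1⟩
  refine (Set.sInter_subset_of_mem hmem).antisymm ?_
  rintro x hx C ⟨⟨v, rfl⟩, hAv⟩
  obtain ⟨u, hu, huv⟩ := exists_isLCA_reach hacy ((subset_cluster_iff hA).1 hAv)
  exact cluster_mono (huniq u hu ▸ huv) hx

end Dag

/-- In a DAG with the `k`-lca-property, the clustering system is pre-`k`-ary. -/
theorem stmt9 {V : Type*} [Fintype V] (k : ℕ) (adj : V → V → Prop) (hacy : Dag.acyclic adj)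
    (hklca : ∀ A : Set V, A ⊆ Dag.leaves adj → A.Nonempty → A.ncard ≤ k →
      Dag.hasUniqueLCA adj A) :
    ∀ U : Set V, U ⊆ Dag.leaves adj → U.Nonempty → U.ncard ≤ k →
      (⋂₀ {C | C ∈ Dag.clusters adj ∧ U ⊆ C}) ∈ Dag.clusters adj := by
  intro U hU hne hcard
  obtain ⟨w, hw, huniq⟩ := hklca U hU hne hcard
  exact ⟨w, Dag.sInter_clusters_supset_eq_cluster hacy hU hw huniq⟩
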